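/- arXiv:1809.01912 — 3 statements merged into one kernel-verified Lean document; each statement's English description precedes it below -/
import Mathlib

section
/- If X is a standard Gaussian random variable (mean 0, variance 1) and f : ℝ → ℝ is Lipschitz (hence absolutely continuous with bounded derivative), then E[f'(X)] = E[X·f(X)]. -/
open MeasureTheory ProbabilityTheory Filter Set Topology
open scoped NNReal

/-!
With `φ` the Gaussian density, `(f φ)' = (f' - x f) φ` almost everywhere. The product `f φ` is
absolutely continuous on compact intervals (Lipschitz times smooth), and both it and its derivative
are integrable, since a Lipschitz `f` grows at most linearly and the Gaussian has all moments. The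
limits of such a function at `±∞` exist by the fundamental theorem of calculus and must vanish by
integrability, so `∫ (f φ)' = 0`.
-/

section LocallyAbsolutelyContinuous

variable {g : ℝ → ℝ}

lemma tendsto_atTop_of_integrable_deriv (hg : ∀ a b, AbsolutelyContinuousOnInterval g a b)
    (hg' : Integrable (deriv g)) :
    Tendsto g atTop (𝓝 (g 0 + ∫ x in Ioi 0, deriv g x)) := by
  refine ((intervalIntegral_tendsto_integral_Ioi 0 hg'.integrableOn tendsto_id).const_add
    (g 0)).congr fun x => ?_
  rw [id, (hg 0 x).integral_deriv_eq_sub, add_sub_cancel]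

lemma tendsto_atBot_of_integrable_deriv (hg : ∀ a b, AbsolutelyContinuousOnInterval g a b)
    (hg' : Integrable (deriv g)) :
    Tendsto g atBot (𝓝 (g 0 - ∫ x in Iic 0, deriv g x)) := by
  refine ((intervalIntegral_tendsto_integral_Iic 0 hg'.integrableOn tendsto_id).const_sub
    (g 0)).congr fun x => ?_
  rw [id, (hg x 0).integral_deriv_eq_sub, sub_sub_cancel]

theorem integral_deriv_eq_zero_of_integrable (hg : ∀ a b, AbsolutelyContinuousOnInterval g a b)
    (hg' : Integrable (deriv g)) (hgi : Integrable g) : ∫ x, deriv g x = 0 := by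
  have htop := tendsto_atTop_of_integrable_deriv hg hg'
  have hbot := tendsto_atBot_of_integrable_deriv hg hg'
  rw [(hgi.integrableAtFilter atTop).eq_zero_of_tendsto (fun s hs => ?_) htop] at htop
  rw [(hgi.integrableAtFilter atBot).eq_zero_of_tendsto (fun s hs => ?_) hbot] at hbot
  · refine tendsto_nhds_unique
      (intervalIntegral_tendsto_integral hg' tendsto_neg_atTop_atBot tendsto_id) ?_
    simpa using (htop.sub (hbot.comp tendsto_neg_atTop_atBot)).congr
      fun x => ((hg (-x) x).integral_deriv_eq_sub).symm
  · obtain ⟨b, hb⟩ := mem_atBot_sets.1 hs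
    exact measure_mono_top (fun x hx => hb x hx) Real.volume_Iic
  · obtain ⟨b, hb⟩ := mem_atTop_sets.1 hs
    exact measure_mono_top (fun x hx => hb x hx) Real.volume_Ici

end LocallyAbsolutelyContinuous

lemma aestronglyMeasurable_of_ae_hasDerivAt {μ : Measure ℝ} {f f' : ℝ → ℝ}
    (hf' : ∀ᵐ x ∂μ, HasDerivAt f (f' x) x) : AEStronglyMeasurable f' μ :=
  (aestronglyMeasurable_deriv f μ).congr (by filter_upwards [hf'] with x hx using hx.deriv)

lemma LipschitzWith.comp_memLp_of_isFiniteMeasure {α E F : Type*} [MeasurableSpace α]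
    [NormedAddCommGroup E] [NormedAddCommGroup F] {μ : Measure α} [IsFiniteMeasure μ]
    {p : ENNReal} {X : α → E} {f : E → F} {K : ℝ≥0} (hf : LipschitzWith K f)
    (hX : MemLp X p μ) : MemLp (fun a => f (X a)) p μ := by
  have h0 : MemLp (fun a => f (X a) - f 0) p μ :=
    (hf.sub (LipschitzWith.const (f 0))).comp_memLp (by simp) hX
  convert h0.add (memLp_const (f 0)) using 1
  ext a
  simp

namespace ProbabilityTheory

variable {μ : ℝ} {v : ℝ≥0}

lemma hasDerivAt_gaussianPDFReal (μ : ℝ) (v : ℝ≥0) (x : ℝ) :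
    HasDerivAt (gaussianPDFReal μ v) (-((x - μ) / v) * gaussianPDFReal μ v x) x := by
  have hexp : HasDerivAt (fun x => -(x - μ) ^ 2 / (2 * v)) (-((x - μ) / v)) x := by
    refine ((((hasDerivAt_id' x).sub_const μ).fun_pow 2).fun_neg.div_const
      (2 * (v : ℝ))).congr_deriv ?_
    norm_num
    ring
  rw [gaussianPDFReal_def]
  exact (hexp.exp.const_mul _).congr_deriv (by ring)

lemma contDiff_gaussianPDFReal (μ : ℝ) (v : ℝ≥0) {n : WithTop ℕ∞} :
    ContDiff ℝ n (gaussianPDFReal μ v) := by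
  rw [gaussianPDFReal_def]
  fun_prop

lemma integrable_gaussianReal_iff {E : Type*} [NormedAddCommGroup E] [NormedSpace ℝ E]
    {h : ℝ → E} (hv : v ≠ 0) :
    Integrable h (gaussianReal μ v) ↔ Integrable (fun x => gaussianPDFReal μ v x • h x) := by
  rw [gaussianReal_of_var_ne_zero _ hv, integrable_withDensity_iff_integrable_smul'
    (measurable_gaussianPDF μ v) (ae_of_all _ fun _ => gaussianPDF_lt_top)]
  simp only [toReal_gaussianPDF]

theorem var_mul_integral_deriv_gaussianReal (μ : ℝ) (v : ℝ≥0) {f f' : ℝ → ℝ} {K : ℝ≥0}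
    (hf : LipschitzWith K f) (hf' : ∀ᵐ x, HasDerivAt f (f' x) x) :
    (v : ℝ) * ∫ x, f' x ∂gaussianReal μ v = ∫ x, (x - μ) * f x ∂gaussianReal μ v := by
  rcases eq_or_ne v 0 with rfl | hv
  · simp [gaussianReal_zero_var]
  set φ := gaussianPDFReal μ v
  have hac := gaussianReal_absolutelyContinuous μ hv
  have hf'N : Integrable f' (gaussianReal μ v) := by
    refine Integrable.of_bound (aestronglyMeasurable_of_ae_hasDerivAt (hac.ae_le hf')) K ?_
    filter_upwards [hac.ae_le hf'] with x hx using hx.deriv ▸ norm_deriv_le_of_lipschitz hf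
  have hid : MemLp id 2 (gaussianReal μ v) := memLp_id_gaussianReal' 2 ENNReal.ofNat_ne_top
  have hfN : MemLp f 2 (gaussianReal μ v) := hf.comp_memLp_of_isFiniteMeasure hid
  have hxfN : Integrable (fun x => (x - μ) / v * f x) (gaussianReal μ v) :=
    ((hid.sub (memLp_const μ)).const_mul (v : ℝ)⁻¹).integrable_mul hfN
      |>.congr (ae_of_all _ fun x => by simp [div_eq_inv_mul])
  have hderiv : deriv (fun x => φ x * f x) =ᵐ[volume]
      fun x => φ x • (f' x - (x - μ) / v * f x) := by
    filter_upwards [hf'] with x hx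
    rw [((hasDerivAt_gaussianPDFReal μ v x).fun_mul hx).deriv, smul_eq_mul]
    ring
  have hstein : ∫ x, f' x - (x - μ) / v * f x ∂gaussianReal μ v = 0 := by
    rw [integral_gaussianReal_eq_integral_smul hv, ← integral_congr_ae hderiv]
    refine integral_deriv_eq_zero_of_integrable (fun a b => ?_) ?_ ?_
    · exact ((contDiff_gaussianPDFReal μ v).contDiffOn.absolutelyContinuousOnInterval).fun_mul
        (hf.lipschitzOnWith.absolutelyContinuousOnInterval)
    · exact ((integrable_gaussianReal_iff hv).1 (hf'N.sub hxfN)).congr hderiv.symm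
    · exact (integrable_gaussianReal_iff hv).1 (hfN.integrable one_le_two)
  rw [integral_sub hf'N hxfN, sub_eq_zero] at hstein
  rw [hstein, ← integral_const_mul]
  congr with x
  field_simp [NNReal.coe_ne_zero.2 hv]

end ProbabilityTheory

theorem stein_lemma_gaussian_integration_by_parts_general
    {Ω : Type*} [MeasurableSpace Ω] (P : Measure Ω)
    (X : Ω → ℝ)
    (hXgauss : Measure.map X P = gaussianReal 0 1)
    (f f' : ℝ → ℝ) (K : NNReal) (hf : LipschitzWith K f)
    (hf' : ∀ᵐ x ∂(volume : Measure ℝ), HasDerivAt f (f' x) x) :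
    ∫ ω, f' (X ω) ∂P = ∫ ω, X ω * f (X ω) ∂P := by
  have hX : HasLaw X (gaussianReal 0 1) P :=
    ⟨.of_map_ne_zero (by simp [hXgauss, NeZero.ne]), hXgauss⟩
  have hstein := var_mul_integral_deriv_gaussianReal 0 1 hf hf'
  simp only [NNReal.coe_one, one_mul, sub_zero] at hstein
  have hf'meas : AEStronglyMeasurable f' (gaussianReal 0 1) :=
    aestronglyMeasurable_of_ae_hasDerivAt
      ((gaussianReal_absolutelyContinuous 0 one_ne_zero).ae_le hf')
  have hxf : Continuous fun x => x * f x := continuous_id.mul hf.continuous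
  rwa [← hX.integral_comp hf'meas, ← hX.integral_comp hxf.aestronglyMeasurable] at hstein

/-- Gaussian integration by parts (the "if" direction of Stein's lemma):
if `X ~ N(0,1)` and `f` is Lipschitz with a.e. derivative `f'`, then
`E[f'(X)] = E[X * f(X)]`. -/
theorem stein_lemma_gaussian_integration_by_parts
    {Ω : Type*} [MeasurableSpace Ω] (P : Measure Ω) [IsProbabilityMeasure P]
    (X : Ω → ℝ) (hX : Measurable X)
    (hXgauss : Measure.map X P = gaussianReal 0 1)
    (f f' : ℝ → ℝ) (K : NNReal) (hf : LipschitzWith K f)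
    (hf' : ∀ᵐ x ∂(volume : Measure ℝ), HasDerivAt f (f' x) x) :
    ∫ ω, f' (X ω) ∂P = ∫ ω, X ω * f (X ω) ∂P :=
  stein_lemma_gaussian_integration_by_parts_general P X hXgauss f f' K hf hf'
end

section
/- Let N ~ N(0,1) and let h : ℝ → [0,1] be Borel measurable. Define f_h(x) = e^{x²/2} ∫_{-∞}^x (h(y) - E[h(N)]) e^{-y²/2} dy. Then f_h is bounded with ‖f_h‖_∞ ≤ √(π/2). -/
open MeasureTheory ProbabilityTheory Real
open scoped ENNReal NNReal

lemma half_gauss_Ioi : ∫ t in Set.Ioi (0:ℝ), Real.exp (-(t^2)/2) = Real.sqrt (π/2) := by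
  have h1 : ∫ t in Set.Ioi (0:ℝ), Real.exp (-(1/2) * t^2) = Real.sqrt (π/(1/2)) / 2 :=
    integral_gaussian_Ioi (1/2)
  rw [show (fun t : ℝ => Real.exp (-(t^2)/2)) = fun t : ℝ => Real.exp (-(1/2) * t^2) by
    funext t; ring_nf]
  rw [h1, show (π/(1/2)) = (π/2)*2^2 by ring, Real.sqrt_mul (by positivity),
    Real.sqrt_sq (by norm_num : (0:ℝ) ≤ 2)]
  ring

lemma half_gauss_Iic : ∫ t in Set.Iic (0:ℝ), Real.exp (-(t^2)/2) = Real.sqrt (π/2) := by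
  have := integral_comp_neg_Iic (0:ℝ) (fun t => Real.exp (-(t^2)/2))
  simp only [neg_zero, neg_sq] at this
  rw [← half_gauss_Ioi, ← this]

lemma setIntegral_Iic_comp_sub (c : ℝ) (f : ℝ → ℝ) :
    ∫ y in Set.Iic c, f (y - c) = ∫ t in Set.Iic (0:ℝ), f t := by
  have A : MeasurableEmbedding fun x : ℝ => x + c :=
    (Homeomorph.addRight c).isClosedEmbedding.measurableEmbedding
  have := A.setIntegral_map (μ := volume) (fun y => f (y - c)) (Set.Iic c)
  rw [map_add_right_eq_self volume c] at this
  rw [this]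
  simp [Set.preimage_add_const_Iic]

lemma setIntegral_Ioi_comp_sub (c : ℝ) (f : ℝ → ℝ) :
    ∫ y in Set.Ioi c, f (y - c) = ∫ t in Set.Ioi (0:ℝ), f t := by
  have A : MeasurableEmbedding fun x : ℝ => x + c :=
    (Homeomorph.addRight c).isClosedEmbedding.measurableEmbedding
  have := A.setIntegral_map (μ := volume) (fun y => f (y - c)) (Set.Ioi c)
  rw [map_add_right_eq_self volume c] at this
  rw [this]
  simp [Set.preimage_add_const_Ioi]

set_option maxHeartbeats 1000000 in
/-- The solution `f_h` of the Stein equation associated with a Borel function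
`h : ℝ → [0,1]` is bounded by `√(π/2)`. -/
theorem stein_solution_bounded
    (h : ℝ → ℝ) (hmeas : Measurable h) (hrange : ∀ y, h y ∈ Set.Icc (0:ℝ) 1)
    (fh : ℝ → ℝ)
    (hfh : ∀ x, fh x =
      Real.exp (x ^ 2 / 2) *
        ∫ y in Set.Iic x,
          (h y - ∫ z, h z ∂(gaussianReal 0 1)) * Real.exp (-(y ^ 2) / 2)) :
    ∀ x, |fh x| ≤ Real.sqrt (π / 2) := by
  intro x
  set μ := ∫ z, h z ∂(gaussianReal 0 1) with hμdef
  -- integrability of h w.r.t. the Gaussian measure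
  have hint : Integrable h (gaussianReal 0 1) := by
    refine ⟨hmeas.aestronglyMeasurable, ?_⟩
    apply HasFiniteIntegral.of_bounded (C := 1)
    filter_upwards with y
    rw [Real.norm_eq_abs, abs_le]
    exact ⟨by linarith [(hrange y).1], (hrange y).2⟩
  have hμ0 : 0 ≤ μ := integral_nonneg fun y => (hrange y).1
  have hμ1 : μ ≤ 1 := by
    calc μ ≤ ∫ _, (1:ℝ) ∂(gaussianReal 0 1) :=
          integral_mono hint (integrable_const 1) (fun y => (hrange y).2)
      _ = 1 := by simp
  -- bound function
  set G : ℝ → ℝ := fun y => Real.exp (-(y^2)/2) with hGdef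
  have hGint : Integrable G := by
    rw [show G = fun y : ℝ => Real.exp (-(1/2)*y^2) from funext fun y => by
      show Real.exp (-(y^2)/2) = _; congr 1; ring]
    exact integrable_exp_neg_mul_sq (by norm_num)
  set g : ℝ → ℝ := fun y => (h y - μ) * Real.exp (-(y^2)/2) with hgdef
  have habs : ∀ y, |g y| ≤ G y := by
    intro y
    have h1 : |h y - μ| ≤ 1 :=
      abs_le.2 ⟨by linarith [(hrange y).1], by linarith [(hrange y).2]⟩
    calc |g y| = |h y - μ| * Real.exp (-(y^2)/2) := by
          rw [hgdef]; rw [abs_mul, abs_of_pos (Real.exp_pos _)]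
      _ ≤ 1 * Real.exp (-(y^2)/2) := by
          exact mul_le_mul_of_nonneg_right h1 (Real.exp_pos _).le
      _ = G y := by rw [one_mul]
  have hgmeas : Measurable g := by
    apply (hmeas.sub measurable_const).mul
    measurability
  have hgint : Integrable g := by
    refine Integrable.mono hGint hgmeas.aestronglyMeasurable (ae_of_all _ fun y => ?_)
    rw [Real.norm_eq_abs, Real.norm_eq_abs, abs_of_pos (Real.exp_pos _)]
    exact habs y
  -- identification of μ with the Lebesgue integral
  have hdens : ∫ z, h z * Real.exp (-(z^2)/2) = Real.sqrt (2*π) * μ := by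
    have h1 : gaussianReal 0 1 = volume.withDensity (gaussianPDF 0 1) :=
      gaussianReal_of_var_ne_zero 0 one_ne_zero
    have h2 : gaussianPDF 0 1 = fun z => ((gaussianPDFReal 0 1 z).toNNReal : ℝ≥0∞) := rfl
    have h3 : μ = ∫ z, (gaussianPDFReal 0 1 z).toNNReal • h z := by
      rw [hμdef, h1, h2]
      exact integral_withDensity_eq_integral_smul
        ((measurable_gaussianPDFReal 0 1).real_toNNReal) h
    have h4 : ∀ z, (gaussianPDFReal 0 1 z).toNNReal • h z
        = (Real.sqrt (2*π))⁻¹ * (h z * Real.exp (-(z^2)/2)) := by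
      intro z
      rw [NNReal.smul_def, smul_eq_mul,
        Real.coe_toNNReal _ (gaussianPDFReal_nonneg 0 1 z)]
      unfold gaussianPDFReal
      push_cast
      rw [mul_one, sub_zero, mul_one]
      ring
    rw [h3]
    simp_rw [h4]
    rw [integral_const_mul]
    rw [← mul_assoc, mul_inv_cancel₀ (by positivity : Real.sqrt (2*π) ≠ 0), one_mul]
  have hGtot : ∫ z, G z = Real.sqrt (2*π) := by
    rw [show G = fun y : ℝ => Real.exp (-(1/2)*y^2) from funext fun y => by
      show Real.exp (-(y^2)/2) = _; congr 1; ring]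
    rw [integral_gaussian, show π/(1/2) = 2*π by ring]
  have htot : ∫ y, g y = 0 := by
    have hhe : Integrable (fun z => h z * Real.exp (-(z^2)/2)) := by
      refine Integrable.mono hGint
        ((hmeas.mul (by measurability)).aestronglyMeasurable)
        (ae_of_all _ fun y => ?_)
      rw [Real.norm_eq_abs, Real.norm_eq_abs, abs_of_pos (Real.exp_pos _), abs_mul,
        abs_of_pos (Real.exp_pos _)]
      have h1 : |h y| ≤ 1 := abs_le.2 ⟨by linarith [(hrange y).1], (hrange y).2⟩
      calc |h y| * Real.exp (-(y^2)/2) ≤ 1 * Real.exp (-(y^2)/2) :=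
            mul_le_mul_of_nonneg_right h1 (Real.exp_pos _).le
        _ = G y := one_mul _
    have : ∫ y, g y = (∫ z, h z * Real.exp (-(z^2)/2)) - μ * ∫ z, G z := by
      rw [hgdef]
      simp_rw [sub_mul]
      rw [integral_sub hhe (hGint.const_mul μ), integral_const_mul]
    rw [this, hdens, hGtot]
    ring
  -- integrabilities on sets
  have hgIic : IntegrableOn g (Set.Iic x) := hgint.integrableOn
  have hgIoi : IntegrableOn g (Set.Ioi x) := hgint.integrableOn
  rw [hfh x, abs_mul, abs_of_pos (Real.exp_pos _)]
  rcases le_or_gt x 0 with hx | hx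
  -- case x ≤ 0
  · have key : |∫ y in Set.Iic x, g y| ≤ Real.exp (-(x^2)/2) * Real.sqrt (π/2) := by
      calc |∫ y in Set.Iic x, g y| ≤ ∫ y in Set.Iic x, |g y| :=
            by simpa [Real.norm_eq_abs] using
              norm_integral_le_integral_norm (μ := volume.restrict (Set.Iic x)) g
        _ ≤ ∫ y in Set.Iic x, Real.exp (-(x^2)/2) * Real.exp (-((y-x)^2)/2) := by
            refine setIntegral_mono_on hgint.abs.integrableOn
              (((hGint.comp_sub_right x).const_mul _).integrableOn) measurableSet_Iic
              (fun y hy => ?_)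
            refine le_trans (habs y) ?_
            rw [hGdef, ← Real.exp_add]
            apply Real.exp_le_exp.2
            have hyx : y ≤ x := hy
            nlinarith [mul_nonneg (neg_nonneg.2 hx) (neg_nonneg.2 (sub_nonpos.2 hyx))]
        _ = Real.exp (-(x^2)/2) * ∫ y in Set.Iic x, Real.exp (-((y-x)^2)/2) := by
            rw [integral_const_mul]
        _ = Real.exp (-(x^2)/2) * Real.sqrt (π/2) := by
            rw [setIntegral_Iic_comp_sub x (fun t => Real.exp (-(t^2)/2)), half_gauss_Iic]
    calc Real.exp (x^2/2) * |∫ y in Set.Iic x, g y|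
        ≤ Real.exp (x^2/2) * (Real.exp (-(x^2)/2) * Real.sqrt (π/2)) :=
          mul_le_mul_of_nonneg_left key (Real.exp_pos _).le
      _ = Real.sqrt (π/2) := by
          rw [← mul_assoc, ← Real.exp_add]
          ring_nf
          rw [Real.exp_zero, one_mul]
  -- case 0 < x
  · have hswap : ∫ y in Set.Iic x, g y = -∫ y in Set.Ioi x, g y := by
      have := intervalIntegral.integral_Iic_add_Ioi (μ := volume) (b := x) hgIic hgIoi
      rw [htot] at this
      linarith
    have key : |∫ y in Set.Ioi x, g y| ≤ Real.exp (-(x^2)/2) * Real.sqrt (π/2) := by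
      calc |∫ y in Set.Ioi x, g y| ≤ ∫ y in Set.Ioi x, |g y| :=
            by simpa [Real.norm_eq_abs] using
              norm_integral_le_integral_norm (μ := volume.restrict (Set.Ioi x)) g
        _ ≤ ∫ y in Set.Ioi x, Real.exp (-(x^2)/2) * Real.exp (-((y-x)^2)/2) := by
            refine setIntegral_mono_on hgint.abs.integrableOn
              (((hGint.comp_sub_right x).const_mul _).integrableOn) measurableSet_Ioi
              (fun y hy => ?_)
            refine le_trans (habs y) ?_
            rw [hGdef, ← Real.exp_add]
            apply Real.exp_le_exp.2
            have hyx : x ≤ y := le_of_lt hy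
            nlinarith [mul_nonneg hx.le (sub_nonneg.2 hyx)]
        _ = Real.exp (-(x^2)/2) * ∫ y in Set.Ioi x, Real.exp (-((y-x)^2)/2) := by
            rw [integral_const_mul]
        _ = Real.exp (-(x^2)/2) * Real.sqrt (π/2) := by
            rw [setIntegral_Ioi_comp_sub x (fun t => Real.exp (-(t^2)/2)), half_gauss_Ioi]
    rw [hswap, abs_neg]
    calc Real.exp (x^2/2) * |∫ y in Set.Ioi x, g y|
        ≤ Real.exp (x^2/2) * (Real.exp (-(x^2)/2) * Real.sqrt (π/2)) :=
          mul_le_mul_of_nonneg_left key (Real.exp_pos _).le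
      _ = Real.sqrt (π/2) := by
          rw [← mul_assoc, ← Real.exp_add]
          ring_nf
          rw [Real.exp_zero, one_mul]
end

section
/- With f_h defined as f_h(x) = e^{x²/2} ∫_{-∞}^x (h(y) - E[h(N)]) e^{-y²/2} dy for Borel measurable h : ℝ → [0,1], there is a version of the derivative f_h' satisfying f_h'(x) - x·f_h(x) = h(x) - E[h(N)] for almost every x ∈ ℝ. -/
open MeasureTheory ProbabilityTheory Real

/-! The integral `F x = ∫_{-∞}^x g(y) e^{-y²/2} dy` of an integrable function is differentiable
a.e. with `F' = g e^{-y²/2}` (Lebesgue differentiation theorem), so the product rule applied to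
`f_h = e^{x²/2} F` gives `f_h' = x f_h + g` a.e.; here `g = h - E[h(N)]`, which is bounded. -/

theorem MeasureTheory.Integrable.ae_hasDerivAt_integral_Iic {E : Type*} [NormedAddCommGroup E]
    [NormedSpace ℝ E] [CompleteSpace E] {f : ℝ → E} (hf : Integrable f) :
    ∀ᵐ x, HasDerivAt (fun x => ∫ y in Set.Iic x, f y) (f x) x := by
  filter_upwards [LocallyIntegrable.ae_hasDerivAt_integral hf.locallyIntegrable] with x hx
  have hsplit : (fun x => ∫ y in Set.Iic x, f y)
      = fun x => (∫ y in Set.Iic 0, f y) + ∫ y in (0 : ℝ)..x, f y := by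
    funext x
    rw [← intervalIntegral.integral_Iic_sub_Iic hf.integrableOn hf.integrableOn,
      add_sub_cancel]
  rw [hsplit]
  exact (hx 0).const_add _

theorem integrable_exp_neg_sq_div_two :
    Integrable fun y : ℝ => exp (-(y ^ 2) / 2) := by
  convert integrable_exp_neg_mul_sq (show (0 : ℝ) < 1 / 2 by norm_num) using 3
  ring

theorem integrable_mul_exp_neg_sq_div_two {g : ℝ → ℝ} {C : ℝ} (hg : Measurable g)
    (hbound : ∀ y, |g y| ≤ C) :
    Integrable fun y => g y * exp (-(y ^ 2) / 2) :=
  integrable_exp_neg_sq_div_two.bdd_mul hg.aestronglyMeasurable (ae_of_all _ hbound)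

theorem hasDerivAt_exp_sq_div_two (x : ℝ) :
    HasDerivAt (fun x => exp (x ^ 2 / 2)) (x * exp (x ^ 2 / 2)) x := by
  have hsq : HasDerivAt (fun x : ℝ => x ^ 2 / 2) x x := by
    simpa using (hasDerivAt_pow 2 x).div_const 2
  simpa [mul_comm] using hsq.exp

theorem ae_hasDerivAt_exp_sq_mul_integral_Iic {g : ℝ → ℝ}
    (hg : Integrable fun y => g y * exp (-(y ^ 2) / 2)) :
    ∀ᵐ x, HasDerivAt (fun x => exp (x ^ 2 / 2) * ∫ y in Set.Iic x, g y * exp (-(y ^ 2) / 2))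
      (x * (exp (x ^ 2 / 2) * ∫ y in Set.Iic x, g y * exp (-(y ^ 2) / 2)) + g x) x := by
  filter_upwards [hg.ae_hasDerivAt_integral_Iic] with x hF
  refine ((hasDerivAt_exp_sq_div_two x).mul hF).congr_deriv ?_
  have hcancel : exp (x ^ 2 / 2) * exp (-(x ^ 2) / 2) = 1 := by
    rw [← exp_add, neg_div, add_neg_cancel, exp_zero]
  linear_combination g x * hcancel

/-- There is a version of the derivative of the Stein equation solution `f_h`
satisfying `f_h'(x) - x f_h(x) = h(x) - E[h(N)]` for a.e. `x ∈ ℝ`. -/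
theorem stein_solution_solves_stein_equation
    (h : ℝ → ℝ) (hmeas : Measurable h) (hrange : ∀ y, h y ∈ Set.Icc (0:ℝ) 1)
    (fh : ℝ → ℝ)
    (hfh : ∀ x, fh x =
      Real.exp (x ^ 2 / 2) *
        ∫ y in Set.Iic x,
          (h y - ∫ z, h z ∂(gaussianReal 0 1)) * Real.exp (-(y ^ 2) / 2)) :
    ∃ fh' : ℝ → ℝ,
      ∀ᵐ x ∂(volume : Measure ℝ),
        HasDerivAt fh (fh' x) x ∧
        fh' x - x * fh x = h x - ∫ z, h z ∂(gaussianReal 0 1) := by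
  set m := ∫ z, h z ∂(gaussianReal 0 1)
  have hbound : ∀ y, |h y - m| ≤ 1 + |m| := fun y =>
    calc |h y - m| ≤ |h y| + |m| := abs_sub _ _
      _ ≤ 1 + |m| := by rw [abs_of_nonneg (hrange y).1]; linarith [(hrange y).2]
  have hint : Integrable fun y => (h y - m) * exp (-(y ^ 2) / 2) :=
    integrable_mul_exp_neg_sq_div_two (hmeas.sub measurable_const) hbound
  refine ⟨fun x => x * fh x + (h x - m), ?_⟩
  filter_upwards [ae_hasDerivAt_exp_sq_mul_integral_Iic hint] with x hx
  simp only [← hfh] at hx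
  exact ⟨hx, by ring⟩
end
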